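/- Suppose n simple complex Lie algebras 𝔤₁,...,𝔤ₙ with dual Coxeter numbers h₁^∨,...,hₙ^∨ and positive rational levels k₁,...,kₙ satisfy h_i^∨/k_i = (d−24)/24 for all i, where d = Σᵢ dim 𝔤ᵢ > 24. Then the number of possible families of pairs (𝔤ᵢ, kᵢ) (up to isomorphism and reordering) with all kᵢ positive integers is finite. -/

import Mathlib

/-- The types of finite-dimensional complex simple Lie algebras (with the usual
rank restrictions so that each isomorphism class appears exactly once). -/
inductive SimpleLieType : Type
  | A : {n : ℕ // 1 ≤ n} → SimpleLieType
  | B : {n : ℕ // 2 ≤ n} → SimpleLieType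
  | C : {n : ℕ // 3 ≤ n} → SimpleLieType
  | D : {n : ℕ // 4 ≤ n} → SimpleLieType
  | E6 : SimpleLieType
  | E7 : SimpleLieType
  | E8 : SimpleLieType
  | F4 : SimpleLieType
  | G2 : SimpleLieType

/-- The dimension of the simple Lie algebra of the given type. -/
def SimpleLieType.dim : SimpleLieType → ℕ
  | A n => n.1 ^ 2 + 2 * n.1
  | B n => 2 * n.1 ^ 2 + n.1
  | C n => 2 * n.1 ^ 2 + n.1
  | D n => 2 * n.1 ^ 2 - n.1
  | E6 => 78
  | E7 => 133
  | E8 => 248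
  | F4 => 52
  | G2 => 14

/-- The dual Coxeter number `h^∨` of the simple Lie algebra of the given type. -/
def SimpleLieType.dualCoxeter : SimpleLieType → ℕ
  | A n => n.1 + 1
  | B n => 2 * n.1 - 1
  | C n => n.1 + 1
  | D n => 2 * n.1 - 2
  | E6 => 12
  | E7 => 18
  | E8 => 30
  | F4 => 9
  | G2 => 4

/-!
Write `d = Σ dim 𝔤ᵢ`. Any single level equation gives `d - 24 ≤ kᵢ (d - 24) = 24 hᵢ^∨`, and
`(h^∨)² ≤ 4 dim 𝔤 ≤ 4 d` for every simple type, so `(d - 24)² ≤ 2304 d` and `d ≤ 2352`.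
Hence every summand has rank at most `2352` (finitely many types) and level
`kᵢ ≤ 24 hᵢ^∨ ≤ 24 · 2352`, and since `dim 𝔤 ≥ 3` there are at most `784` summands.
Multisets of bounded size over a finite set form a finite set.
-/

namespace SimpleLieType

def rank : SimpleLieType → ℕ
  | A n | B n | C n | D n => n.1
  | E6 => 6
  | E7 => 7
  | E8 => 8
  | F4 => 4
  | G2 => 2

lemma rank_le_dim (t : SimpleLieType) : t.rank ≤ t.dim := by
  rcases t with ⟨n, hn⟩ | ⟨n, hn⟩ | ⟨n, hn⟩ | ⟨n, hn⟩ | _ | _ | _ | _ | _ <;>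
    norm_num [rank, dim] <;>
    zify [show n ≤ 2 * n ^ 2 by nlinarith] <;> nlinarith

lemma three_le_dim (t : SimpleLieType) : 3 ≤ t.dim := by
  rcases t with ⟨n, hn⟩ | ⟨n, hn⟩ | ⟨n, hn⟩ | ⟨n, hn⟩ | _ | _ | _ | _ | _ <;>
    norm_num [dim] <;>
    zify [show n ≤ 2 * n ^ 2 by nlinarith] <;> nlinarith

lemma dualCoxeter_le_dim (t : SimpleLieType) : t.dualCoxeter ≤ t.dim := by
  rcases t with ⟨n, hn⟩ | ⟨n, hn⟩ | ⟨n, hn⟩ | ⟨n, hn⟩ | _ | _ | _ | _ | _ <;>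
    norm_num [dualCoxeter, dim] <;>
    zify [show n ≤ 2 * n ^ 2 by nlinarith, show 1 ≤ 2 * n by omega, show 2 ≤ 2 * n by omega] <;>
    nlinarith

lemma dualCoxeter_sq_le (t : SimpleLieType) : t.dualCoxeter ^ 2 ≤ 4 * t.dim := by
  rcases t with ⟨n, hn⟩ | ⟨n, hn⟩ | ⟨n, hn⟩ | ⟨n, hn⟩ | _ | _ | _ | _ | _ <;>
    norm_num [dualCoxeter, dim] <;>
    zify [show n ≤ 2 * n ^ 2 by nlinarith, show 1 ≤ 2 * n by omega, show 2 ≤ 2 * n by omega] <;>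
    nlinarith

lemma finite_setOf_rank_le (N : ℕ) : {t : SimpleLieType | t.rank ≤ N}.Finite := by
  have h {m : ℕ} : {n : {n : ℕ // m ≤ n} | n.1 ≤ N}.Finite :=
    (Set.finite_Iic N).preimage Subtype.val_injective.injOn
  refine ((((h.image A).union (h.image B)).union ((h.image C).union (h.image D))).union
    (Set.toFinite {E6, E7, E8, F4, G2})).subset ?_
  rintro (n | n | n | n | _ | _ | _ | _ | _) hn <;> simp_all [rank]

end SimpleLieType

theorem Set.Finite.finite_multisets_of_card_le {α : Type*} {S : Set α} (hS : S.Finite) (N : ℕ) :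
    {s : Multiset α | (∀ a ∈ s, a ∈ S) ∧ Multiset.card s ≤ N}.Finite := by
  classical
  refine (Set.finite_Iic (N • hS.toFinset.val)).subset ?_
  rintro s ⟨hsub, hcard⟩
  exact (Multiset.le_card_smul_iff_subset.2 fun a ha => hS.mem_toFinset.2 (hsub a ha)).trans
    (nsmul_le_nsmul_left (Multiset.zero_le _) hcard)

def totalDim (F : Multiset (SimpleLieType × ℕ+)) : ℕ :=
  (F.map fun p => p.1.dim).sum

section totalDim

variable {F : Multiset (SimpleLieType × ℕ+)} {p : SimpleLieType × ℕ+}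

lemma dim_le_totalDim (hp : p ∈ F) : p.1.dim ≤ totalDim F :=
  Multiset.le_sum_of_mem (Multiset.mem_map_of_mem (fun p => p.1.dim) hp)

lemma three_mul_card_le_totalDim (F : Multiset (SimpleLieType × ℕ+)) :
    3 * Multiset.card F ≤ totalDim F := by
  rw [mul_comm]
  simpa [totalDim] using Multiset.card_nsmul_le_sum (s := F.map fun p => p.1.dim) (a := 3)
    (Multiset.forall_mem_map_iff.2 fun p _ => p.1.three_le_dim)

lemma totalDim_sub_le (hlev : 24 * p.1.dualCoxeter = p.2 * (totalDim F - 24)) :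
    totalDim F - 24 ≤ 24 * p.1.dualCoxeter :=
  hlev ▸ Nat.le_mul_of_pos_left _ p.2.pos

lemma level_le (hd : 24 < totalDim F)
    (hlev : 24 * p.1.dualCoxeter = p.2 * (totalDim F - 24)) :
    (p.2 : ℕ) ≤ 24 * p.1.dualCoxeter :=
  hlev ▸ Nat.le_mul_of_pos_right _ (by omega)

lemma totalDim_le (hd : 24 < totalDim F) (hp : p ∈ F)
    (hlev : 24 * p.1.dualCoxeter = p.2 * (totalDim F - 24)) :
    totalDim F ≤ 2352 := by
  obtain ⟨e, he⟩ := Nat.exists_eq_add_of_le hd.le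
  have key : e ^ 2 ≤ 2304 * totalDim F := calc
    e ^ 2 ≤ (24 * p.1.dualCoxeter) ^ 2 := by
      gcongr; have := totalDim_sub_le hlev; omega
    _ = 576 * p.1.dualCoxeter ^ 2 := by ring
    _ ≤ 576 * (4 * totalDim F) := by
      gcongr; exact p.1.dualCoxeter_sq_le.trans (Nat.mul_le_mul_left 4 (dim_le_totalDim hp))
    _ = 2304 * totalDim F := by ring
  rw [he] at key ⊢
  nlinarith

end totalDim

/-- Suppose simple complex Lie algebras `𝔤₁, …, 𝔤ₙ` with dual Coxeter numbers
`hᵢ^∨` and positive integer levels `kᵢ` satisfy `hᵢ^∨ / kᵢ = (d - 24)/24` for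
all `i`, where `d = Σᵢ dim 𝔤ᵢ > 24`.  Then the number of possible families of
pairs `(𝔤ᵢ, kᵢ)` — up to isomorphism and reordering, so modelled as multisets of
pairs (simple type, level) — is finite. -/
theorem finitely_many_families :
    {F : Multiset (SimpleLieType × ℕ+) |
      24 < (F.map (fun p => p.1.dim)).sum ∧
      ∀ p ∈ F, 24 * p.1.dualCoxeter =
        (p.2 : ℕ) * ((F.map (fun p => p.1.dim)).sum - 24)}.Finite := by
  refine (((SimpleLieType.finite_setOf_rank_le 2352).prod (Set.finite_Iic 56448)
    ).finite_multisets_of_card_le 784).subset ?_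
  rintro F ⟨hd, hlev⟩
  obtain ⟨q, hq⟩ := Multiset.exists_mem_of_ne_zero (by rintro rfl; simp at hd : F ≠ 0)
  have hD : totalDim F ≤ 2352 := totalDim_le hd hq (hlev q hq)
  have hdim {p} (hp : p ∈ F) : p.1.dim ≤ 2352 := (dim_le_totalDim hp).trans hD
  refine ⟨fun p hp => ⟨p.1.rank_le_dim.trans (hdim hp), ?_⟩,
    by have := three_mul_card_le_totalDim F; omega⟩
  rw [Set.mem_Iic, ← PNat.coe_le_coe]
  exact (level_le hd (hlev p hp)).trans
    (Nat.mul_le_mul_left 24 (p.1.dualCoxeter_le_dim.trans (hdim hp)))
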